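/- arXiv:2203.05979 — 2 statements merged into one kernel-verified Lean document; each statement's English description precedes it below -/
import Mathlib

section
/- Let $C^\bullet$ be a cochain complex of modules over a ring, equipped with a decreasing filtration $F^j C^\bullet \subseteq F^k C^\bullet$ for $k \le j$ (indexed by integers, with $F^j$ shrinking as $j \to +\infty$). If the filtration is complete, i.e. the natural map $F^k C^\bullet \to \varprojlim_{j} F^k C^\bullet / F^j C^\bullet$ is an isomorphism for each $k$, and there exists a natural number $d \ge 1$ such that for all filtration levels $\lambda$ and degrees $p$ one has $F^{\lambda} C^p \cap \partial(C^{p-1}) \subseteq \partial(F^{\lambda - d} C^{p-1})$, then the canonical map $H^*(F^k C^\bullet) \to \varprojlim_{j} H^*(F^k C^\bullet / F^j C^\bullet)$ is injective. -/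
/-- Injectivity of the canonical map `H^*(F^k C) → lim_j H^*(F^k C / F^j C)` for a
complete decreasing filtration of a cochain complex satisfying the boundary-depth
condition. Stated concretely: a cocycle in `F^k` whose class vanishes in every relative
cohomology group `H^*(F^k/F^j)` is a boundary of an element of `F^k`. -/
theorem stmt_0 {R : Type} [CommRing R] (C : ℤ → Type) [∀ p, AddCommGroup (C p)]
    [∀ p, Module R (C p)]
    (d : ∀ p, C p →ₗ[R] C (p + 1))
    (hd : ∀ p (x : C p), d (p + 1) (d p x) = 0)
    (F : ℤ → ∀ p, Submodule R (C p))
    -- decreasing filtration: `F j ⊆ F k` for `k ≤ j`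
    (hdec : ∀ k j : ℤ, k ≤ j → ∀ p, F j p ≤ F k p)
    -- each `F k` is a subcomplex
    (hsub : ∀ (k p : ℤ), ∀ x ∈ F k p, d p x ∈ F k (p + 1))
    -- Hausdorff part of completeness
    (hHaus : ∀ (p : ℤ) (x : C p), (∀ j : ℤ, x ∈ F j p) → x = 0)
    -- completeness: every Cauchy sequence in `F k` (w.r.t. the filtration topology)
    -- has a limit in `F k`
    (hcompl : ∀ (k p : ℤ) (x : ℕ → C p), (∀ n, x n ∈ F k p) →
      (∀ n : ℕ, x (n + 1) - x n ∈ F (n : ℤ) p) →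
      ∃ y ∈ F k p, ∀ n : ℕ, y - x n ∈ F (n : ℤ) p)
    -- boundary-depth condition with shift `δ ≥ 1`:
    -- `F^λ C^{p+1} ∩ ∂(C^p) ⊆ ∂(F^{λ-δ} C^p)`
    (δ : ℤ) (hδ : 1 ≤ δ)
    (hdepth : ∀ (lam p : ℤ) (x : C p), d p x ∈ F lam (p + 1) →
      ∃ y ∈ F (lam - δ) p, d p y = d p x) :
    ∀ (k p : ℤ) (ξ : C (p + 1)), ξ ∈ F k (p + 1) → d (p + 1) ξ = 0 →
      (∀ j : ℤ, ∃ θ ∈ F k p, ξ - d p θ ∈ F j (p + 1)) →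
      ∃ ζ ∈ F k p, d p ζ = ξ := by
  intro k p ξ hξF hξd hvan
  -- invariant predicate
  set Q : ℕ → C p → Prop :=
    fun n x => x ∈ F k p ∧ ξ - d p x ∈ F (max k n + δ) (p + 1) with hQ
  have base : ∃ x, Q 0 x := by
    obtain ⟨θ, hθ, hθ'⟩ := hvan (max k 0 + δ)
    exact ⟨θ, hθ, hθ'⟩
  have step : ∀ (n : ℕ) (x : C p), Q n x →
      ∃ y, Q (n + 1) y ∧ y - x ∈ F (n : ℤ) p := by
    intro n x hx
    obtain ⟨hxF, hxd⟩ := hx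
    obtain ⟨θ, hθF, hθd⟩ := hvan (max k (n + 1 : ℕ) + δ)
    have hmono : (max k (n : ℤ) + δ) ≤ (max k ((n + 1 : ℕ) : ℤ) + δ) := by
      push_cast
      gcongr <;> omega
    have hdiff : d p (θ - x) ∈ F (max k (n : ℤ) + δ) (p + 1) := by
      have : d p (θ - x) = (ξ - d p x) - (ξ - d p θ) := by
        rw [map_sub]; abel
      rw [this]
      exact sub_mem hxd (hdec _ _ hmono _ hθd)
    obtain ⟨y, hyF, hyd⟩ := hdepth (max k (n : ℤ) + δ) p (θ - x) hdiff
    rw [add_sub_cancel_right] at hyF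
    refine ⟨x + y, ⟨?_, ?_⟩, ?_⟩
    · exact add_mem hxF (hdec k _ (le_max_left _ _) _ hyF)
    · have : ξ - d p (x + y) = ξ - d p θ := by
        rw [map_add, hyd, map_sub]; abel
      rw [this]; exact hθd
    · simpa using hdec (n : ℤ) _ (le_max_right _ _) _ hyF
  -- build the sequence
  choose f hf1 hf2 using step
  let seq : ∀ n : ℕ, {x : C p // Q n x} := fun n =>
    Nat.rec (motive := fun m => {x : C p // Q m x})
      ⟨Classical.choose base, Classical.choose_spec base⟩
      (fun m ih => ⟨f m ih.1 ih.2, hf1 m ih.1 ih.2⟩) n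
  have hseqQ : ∀ n, Q n (seq n).1 := fun n => (seq n).2
  have hseqdiff : ∀ n : ℕ, (seq (n + 1)).1 - (seq n).1 ∈ F (n : ℤ) p :=
    fun n => hf2 n (seq n).1 (seq n).2
  obtain ⟨ζ, hζF, hζ⟩ := hcompl k p (fun n => (seq n).1)
    (fun n => (hseqQ n).1) hseqdiff
  refine ⟨ζ, hζF, ?_⟩
  have key : ∀ n : ℕ, ξ - d p ζ ∈ F (n : ℤ) (p + 1) := by
    intro n
    have h1 : ξ - d p (seq n).1 ∈ F (n : ℤ) (p + 1) := by
      refine hdec _ _ ?_ _ (hseqQ n).2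
      have := le_max_right k (n : ℤ)
      omega
    have h2 : d p ζ - d p (seq n).1 ∈ F (n : ℤ) (p + 1) := by
      have := hsub (n : ℤ) p _ (hζ n)
      rwa [map_sub] at this
    have : ξ - d p ζ = (ξ - d p (seq n).1) - (d p ζ - d p (seq n).1) := by abel
    rw [this]; exact sub_mem h1 h2
  have : ξ - d p ζ = 0 := by
    apply hHaus
    intro j
    exact hdec j (j.toNat : ℤ) (Int.self_le_toNat j) _ (key j.toNat)
  exact (sub_eq_zero.mp this).symm
end

section
/- Let $C^\bullet$ be a cochain complex with a complete decreasing filtration $\{F^k C^\bullet\}_{k \in \mathbb{Z}}$ (with $F^j \subseteq F^k$ for $k \le j$), and suppose there exists $d \ge 1$ such that $F^{\lambda} C^p \cap \partial(C^{p-1}) \subseteq \partial(F^{\lambda - d} C^{p-1})$ for all $\lambda, p$. Then the canonical map $H^*(F^k C^\bullet) \to \varprojlim_{j} H^*(F^k C^\bullet / F^j C^\bullet)$ is surjective. -/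
/-! Modify the representatives by the coboundaries of the partial sums of the compatibility
cochains: this makes them strictly compatible, i.e. a Cauchy sequence for the filtration, whose
limit is a cocycle because its coboundary lies in every `F^n`. -/

section FilteredComplex

variable {R : Type*} [Ring R] {C : ℤ → Type*} [∀ p, AddCommGroup (C p)]
  [∀ p, Module R (C p)] (d : ∀ p, C p →ₗ[R] C (p + 1)) (F : ℤ → ∀ p, Submodule R (C p))

theorem eq_zero_of_forall_nat_mem (hdec : ∀ k j : ℤ, k ≤ j → ∀ p, F j p ≤ F k p)
    (hHaus : ∀ (p : ℤ) (x : C p), (∀ j : ℤ, x ∈ F j p) → x = 0) {p : ℤ} {x : C p}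
    (hx : ∀ n : ℕ, x ∈ F n p) : x = 0 :=
  hHaus p x fun j => hdec j j.toNat (Int.self_le_toNat j) p (hx j.toNat)

theorem map_eq_zero_of_sub_mem (hdec : ∀ k j : ℤ, k ≤ j → ∀ p, F j p ≤ F k p)
    (hsub : ∀ (k p : ℤ), ∀ x ∈ F k p, d p x ∈ F k (p + 1))
    (hHaus : ∀ (p : ℤ) (x : C p), (∀ j : ℤ, x ∈ F j p) → x = 0) {p : ℤ} {x : ℕ → C p} {y : C p}
    (hx : ∀ n : ℕ, d p (x n) ∈ F n (p + 1)) (hy : ∀ n : ℕ, y - x n ∈ F n p) : d p y = 0 := by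
  refine eq_zero_of_forall_nat_mem F hdec hHaus fun n => ?_
  have hsplit : d p y = d p (y - x n) + d p (x n) := by rw [map_sub, sub_add_cancel]
  rw [hsplit]
  exact add_mem (hsub _ _ _ (hy n)) (hx n)

theorem exists_strictly_compatible_correction {k p : ℤ} {ξ : ℕ → C (p + 1)}
    (hcmp : ∀ n : ℕ, ∃ θ ∈ F k p, ξ (n + 1) - ξ n - d p θ ∈ F n (p + 1)) :
    ∃ τ : ℕ → C p, (∀ n, τ n ∈ F k p) ∧
      ∀ n : ℕ, (ξ (n + 1) + d p (τ (n + 1))) - (ξ n + d p (τ n)) ∈ F n (p + 1) := by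
  choose θ hθF hθ using hcmp
  refine ⟨fun n => -∑ i ∈ Finset.range n, θ i,
    fun n => neg_mem (Submodule.sum_mem _ fun i _ => hθF i), fun n => ?_⟩
  convert hθ n using 1
  simp only [Finset.sum_range_succ, map_neg, map_add]
  abel

end FilteredComplex

theorem stmt_1_general {R : Type} [CommRing R] (C : ℤ → Type) [∀ p, AddCommGroup (C p)]
    [∀ p, Module R (C p)]
    (d : ∀ p, C p →ₗ[R] C (p + 1))
    (hd : ∀ p (x : C p), d (p + 1) (d p x) = 0)
    (F : ℤ → ∀ p, Submodule R (C p))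
    -- decreasing filtration: `F j ⊆ F k` for `k ≤ j`
    (hdec : ∀ k j : ℤ, k ≤ j → ∀ p, F j p ≤ F k p)
    -- each `F k` is a subcomplex
    (hsub : ∀ (k p : ℤ), ∀ x ∈ F k p, d p x ∈ F k (p + 1))
    -- Hausdorff part of completeness
    (hHaus : ∀ (p : ℤ) (x : C p), (∀ j : ℤ, x ∈ F j p) → x = 0)
    -- completeness
    (hcompl : ∀ (k p : ℤ) (x : ℕ → C p), (∀ n, x n ∈ F k p) →
      (∀ n : ℕ, x (n + 1) - x n ∈ F (n : ℤ) p) →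
      ∃ y ∈ F k p, ∀ n : ℕ, y - x n ∈ F (n : ℤ) p) :
    ∀ (k p : ℤ) (ξ : ℕ → C (p + 1)),
      (∀ n, ξ n ∈ F k (p + 1)) →
      (∀ n : ℕ, d (p + 1) (ξ n) ∈ F (n : ℤ) (p + 1 + 1)) →
      (∀ n : ℕ, ∃ θ ∈ F k p, ξ (n + 1) - ξ n - d p θ ∈ F (n : ℤ) (p + 1)) →
      ∃ ξ' ∈ F k (p + 1), d (p + 1) ξ' = 0 ∧
        ∀ n : ℕ, ∃ θ ∈ F k p, ξ' - ξ n - d p θ ∈ F (n : ℤ) (p + 1) := by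
  intro k p ξ hξF hξd hcmp
  obtain ⟨τ, hτF, hcauchy⟩ := exists_strictly_compatible_correction d F hcmp
  set η : ℕ → C (p + 1) := fun n => ξ n + d p (τ n)
  have hηF : ∀ n, η n ∈ F k (p + 1) := fun n => add_mem (hξF n) (hsub k p _ (hτF n))
  have hηd : ∀ n : ℕ, d (p + 1) (η n) ∈ F n (p + 1 + 1) := fun n => by
    simpa only [η, map_add, hd, add_zero] using hξd n
  obtain ⟨ξ', hξ'F, hξ'η⟩ := hcompl k (p + 1) η hηF hcauchy
  refine ⟨ξ', hξ'F, map_eq_zero_of_sub_mem d F hdec hsub hHaus hηd hξ'η,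
    fun n => ⟨τ n, hτF n, ?_⟩⟩
  simpa only [η, sub_sub] using hξ'η n

/-- Surjectivity of the canonical map `H^*(F^k C) → lim_j H^*(F^k C / F^j C)` for a
complete decreasing filtration of a cochain complex satisfying the boundary-depth
condition. Stated concretely: every compatible system of relative cohomology classes
(represented by `ξ n ∈ F^k` with `∂(ξ n) ∈ F^n`, compatible modulo coboundaries and
`F^n`) is realized by a genuine cocycle `ξ∞ ∈ F^k`. -/
theorem stmt_1 {R : Type} [CommRing R] (C : ℤ → Type) [∀ p, AddCommGroup (C p)]
    [∀ p, Module R (C p)]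
    (d : ∀ p, C p →ₗ[R] C (p + 1))
    (hd : ∀ p (x : C p), d (p + 1) (d p x) = 0)
    (F : ℤ → ∀ p, Submodule R (C p))
    -- decreasing filtration: `F j ⊆ F k` for `k ≤ j`
    (hdec : ∀ k j : ℤ, k ≤ j → ∀ p, F j p ≤ F k p)
    -- each `F k` is a subcomplex
    (hsub : ∀ (k p : ℤ), ∀ x ∈ F k p, d p x ∈ F k (p + 1))
    -- Hausdorff part of completeness
    (hHaus : ∀ (p : ℤ) (x : C p), (∀ j : ℤ, x ∈ F j p) → x = 0)
    -- completeness
    (hcompl : ∀ (k p : ℤ) (x : ℕ → C p), (∀ n, x n ∈ F k p) →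
      (∀ n : ℕ, x (n + 1) - x n ∈ F (n : ℤ) p) →
      ∃ y ∈ F k p, ∀ n : ℕ, y - x n ∈ F (n : ℤ) p)
    -- boundary-depth condition with shift `δ ≥ 1`
    (δ : ℤ) (hδ : 1 ≤ δ)
    (hdepth : ∀ (lam p : ℤ) (x : C p), d p x ∈ F lam (p + 1) →
      ∃ y ∈ F (lam - δ) p, d p y = d p x) :
    ∀ (k p : ℤ) (ξ : ℕ → C (p + 1)),
      (∀ n, ξ n ∈ F k (p + 1)) →
      (∀ n : ℕ, d (p + 1) (ξ n) ∈ F (n : ℤ) (p + 1 + 1)) →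
      (∀ n : ℕ, ∃ θ ∈ F k p, ξ (n + 1) - ξ n - d p θ ∈ F (n : ℤ) (p + 1)) →
      ∃ ξ' ∈ F k (p + 1), d (p + 1) ξ' = 0 ∧
        ∀ n : ℕ, ∃ θ ∈ F k p, ξ' - ξ n - d p θ ∈ F (n : ℤ) (p + 1) :=
  stmt_1_general C d hd F hdec hsub hHaus hcompl
end
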